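/- arXiv:2208.11685 — 5 statements merged into one kernel-verified Lean document; each statement's English description precedes it below -/
import Mathlib

section
/- Under the rigid-bounce impulse dynamics, if |v_T(0)| > (7/2)·μ·(1+r)·|ẏ0|, then v_T(n) ≠ 0 for every n ∈ [0, n_F] (the ball slips throughout the bounce), and at lift-off v_T(n_F) = v_T(0) − sign(v_T(0))·(7/2)·μ·(1+r)·|ẏ0|. -/
open Set

private lemma abs_real_sign_le_one (x : ℝ) : |Real.sign x| ≤ 1 := by
  rcases Real.sign_apply_eq x with h | h | h <;> rw [h] <;> norm_num

/-- linear growth from constant right derivative -/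
private lemma lin_of_deriv (vT : ℝ → ℝ) (c b : ℝ) (hb : 0 ≤ b)
    (hcont : ContinuousOn vT (Icc 0 b))
    (hderiv : ∀ x ∈ Ico 0 b, HasDerivWithinAt vT c (Icc 0 b) x) :
    vT b = vT 0 + c * b := by
  have key : ∀ y ∈ Icc 0 b, vT y = vT 0 + c * y := by
    apply eq_of_has_deriv_right_eq (f' := fun _ => c)
    · intro x hx
      exact (hderiv x hx).mono_of_mem_nhdsWithin (Icc_mem_nhdsGE_of_mem hx)
    · intro x hx
      have : HasDerivAt (fun y : ℝ => vT 0 + c * y) c x := by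
        simpa using ((hasDerivAt_id x).const_mul c).const_add (vT 0)
      exact this.hasDerivWithinAt
    · exact hcont
    · exact (continuous_const.add (continuous_const.mul continuous_id)).continuousOn
    · simp
  exact key b (right_mem_Icc.mpr hb)

/-- sign constancy of a nonvanishing continuous function -/
private lemma sign_const (vT : ℝ → ℝ) (b : ℝ)
    (hcont : ContinuousOn vT (Icc 0 b))
    (hne : ∀ x ∈ Icc 0 b, vT x ≠ 0) :
    ∀ x ∈ Icc 0 b, Real.sign (vT x) = Real.sign (vT 0) := by
  intro x hx
  have h0b : (0 : ℝ) ≤ b := hx.1.trans hx.2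
  have h0 : (0 : ℝ) ∈ Icc (0 : ℝ) b := ⟨le_rfl, h0b⟩
  have hsub : Icc (0 : ℝ) x ⊆ Icc 0 b := Icc_subset_Icc le_rfl hx.2
  have hcont' : ContinuousOn vT (Icc 0 x) := hcont.mono hsub
  rcases lt_or_gt_of_ne (hne 0 h0) with hneg | hpos
  · have hxneg : vT x < 0 := by
      by_contra h
      push_neg at h
      have : (0 : ℝ) ∈ Icc (vT 0) (vT x) := ⟨hneg.le, h⟩
      obtain ⟨y, hy, hy0⟩ := intermediate_value_Icc hx.1 hcont' this
      exact hne y (hsub hy) hy0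
    rw [Real.sign_of_neg hxneg, Real.sign_of_neg hneg]
  · have hxpos : 0 < vT x := by
      by_contra h
      push_neg at h
      have : (0 : ℝ) ∈ Icc (vT x) (vT 0) := ⟨h, hpos.le⟩
      obtain ⟨y, hy, hy0⟩ := intermediate_value_Icc' hx.1 hcont' this
      exact hne y (hsub hy) hy0
    rw [Real.sign_of_pos hxpos, Real.sign_of_pos hpos]

/-- Rigid-bounce impulse dynamics: if `|v_T(0)| > (7/2)·μ·(1+r)·|ẏ0|` then the ball
slips throughout the bounce (`v_T(n) ≠ 0` on `[0, n_F]`) and at lift-off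
`v_T(n_F) = v_T(0) − sign(v_T(0))·(7/2)·μ·(1+r)·|ẏ0|`. -/
theorem rigid_bounce_slip_throughout
    (y0' μ r nF : ℝ) (hy0 : y0' < 0) (hμ : 0 < μ) (hr : r ∈ Set.Ioc (0 : ℝ) 1)
    (hnF : nF = (1 + r) * |y0'|)
    (vT : ℝ → ℝ) (hcont : ContinuousOn vT (Set.Icc 0 nF))
    (hslip : ∀ n ∈ Set.Icc 0 nF, vT n ≠ 0 →
      HasDerivWithinAt vT (-(7 / 2) * μ * Real.sign (vT n)) (Set.Icc 0 nF) n)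
    (hroll : ∀ n ∈ Set.Icc 0 nF, vT n = 0 → ∀ m ∈ Set.Icc n nF, vT m = 0)
    (h0 : (7 / 2) * μ * (1 + r) * |y0'| < |vT 0|) :
    (∀ n ∈ Set.Icc 0 nF, vT n ≠ 0) ∧
      vT nF = vT 0 - Real.sign (vT 0) * ((7 / 2) * μ * (1 + r) * |y0'|) := by
  have hy0' : 0 < |y0'| := abs_pos.mpr hy0.ne
  have h1r : (0 : ℝ) < 1 + r := by linarith [hr.1]
  have hnFpos : 0 < nF := by rw [hnF]; positivity
  have hrhs : 0 < (7 / 2) * μ * (1 + r) * |y0'| := by positivity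
  have hvT0 : vT 0 ≠ 0 := by
    intro h; rw [h, abs_zero] at h0; linarith
  set s : ℝ := Real.sign (vT 0) with hs
  have hcnF : (7 / 2) * μ * (1 + r) * |y0'| = (7 / 2) * μ * nF := by
    rw [hnF]; ring
  -- Part 1: no zero
  have hne : ∀ n ∈ Icc 0 nF, vT n ≠ 0 := by
    by_contra h
    push_neg at h
    obtain ⟨n1, hn1, hvn1⟩ := h
    set Z : Set ℝ := {n | n ∈ Icc 0 nF ∧ vT n = 0} with hZ
    have hZne : Z.Nonempty := ⟨n1, hn1, hvn1⟩
    have hZbdd : BddBelow Z := ⟨0, fun z hz => hz.1.1⟩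
    have hZclosed : IsClosed Z := by
      have : Z = Icc 0 nF ∩ vT ⁻¹' {0} := by
        ext z; simp [hZ, Set.mem_inter_iff]
      rw [this]
      exact hcont.preimage_isClosed_of_isClosed isClosed_Icc isClosed_singleton
    set n0 := sInf Z with hn0
    have hn0Z : n0 ∈ Z := hZclosed.csInf_mem hZne hZbdd
    obtain ⟨hn0mem, hvn0⟩ := hn0Z
    have hn0pos : 0 < n0 := by
      rcases hn0mem.1.lt_or_eq with h | h
      · exact h
      · exact absurd hvn0 (by rw [← h]; exact hvT0)
    have hsubn0 : Icc (0:ℝ) n0 ⊆ Icc 0 nF := Icc_subset_Icc le_rfl hn0mem.2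
    have hnelt : ∀ x ∈ Ico (0:ℝ) n0, vT x ≠ 0 := by
      intro x hx hvx
      have : n0 ≤ x := csInf_le hZbdd ⟨⟨hx.1, hx.2.le.trans hn0mem.2⟩, hvx⟩
      exact absurd hx.2 (not_lt.mpr this)
    have hderiv : ∀ x ∈ Ico (0:ℝ) n0, HasDerivWithinAt vT (-(7/2) * μ * s) (Icc 0 n0) x := by
      intro x hx
      have hxIcc : x ∈ Icc (0:ℝ) nF := ⟨hx.1, hx.2.le.trans hn0mem.2⟩
      have hsx : Real.sign (vT x) = s := by
        apply sign_const vT x (hcont.mono (Icc_subset_Icc le_rfl hxIcc.2))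
        · intro y hy
          exact hnelt y ⟨hy.1, lt_of_le_of_lt hy.2 hx.2⟩
        · exact ⟨hx.1, le_rfl⟩
      have := hslip x hxIcc (hnelt x hx)
      rw [hsx] at this
      exact this.mono hsubn0
    have hlin := lin_of_deriv vT (-(7/2) * μ * s) n0 hn0pos.le (hcont.mono hsubn0) hderiv
    rw [hvn0] at hlin
    have habs : |vT 0| ≤ (7/2) * μ * n0 := by
      have : vT 0 = (7/2) * μ * s * n0 := by linarith
      rw [this]
      have hs1 : |s| ≤ 1 := abs_real_sign_le_one _
      have heq : |(7/2) * μ * s * n0| = ((7/2) * μ * n0) * |s| := by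
        rw [abs_mul, abs_mul, abs_mul, abs_of_pos hμ, abs_of_pos hn0pos,
          show |(7/2 : ℝ)| = 7/2 from by norm_num]
        ring
      rw [heq]
      have hpos7 : 0 ≤ (7/2) * μ * n0 := by positivity
      nlinarith [mul_nonneg hpos7 (sub_nonneg.mpr hs1)]
    have : (7/2) * μ * n0 ≤ (7/2) * μ * nF := by nlinarith [hn0mem.2]
    rw [hcnF] at h0
    linarith
  -- Part 2: value at lift-off
  refine ⟨hne, ?_⟩
  have hderiv : ∀ x ∈ Ico (0:ℝ) nF, HasDerivWithinAt vT (-(7/2) * μ * s) (Icc 0 nF) x := by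
    intro x hx
    have hxIcc : x ∈ Icc (0:ℝ) nF := ⟨hx.1, hx.2.le⟩
    have hsx : Real.sign (vT x) = s := sign_const vT nF hcont hne x hxIcc
    have := hslip x hxIcc (hne x hxIcc)
    rw [hsx] at this
    exact this
  have hlin := lin_of_deriv vT (-(7/2) * μ * s) nF hnFpos.le hcont hderiv
  rw [hlin, hcnF]
  ring
end

section
/- Under the rigid-bounce impulse dynamics, if v_T(0) ≥ 0 then v_T(n) ≥ 0 for every n ∈ [0, n_F]; in particular, slip reversal (a change of sign of the tangential contact velocity during the bounce) is impossible in the rigid-bounce model with Coulomb friction. -/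
/-- Rigid-bounce impulse dynamics: if `v_T(0) ≥ 0` then `v_T(n) ≥ 0` throughout the
bounce; slip reversal is impossible in the rigid-bounce model with Coulomb friction. -/
theorem rigid_bounce_no_slip_reversal
    (y0' μ r nF : ℝ) (hy0 : y0' < 0) (hμ : 0 < μ) (hr : r ∈ Set.Ioc (0 : ℝ) 1)
    (hnF : nF = (1 + r) * |y0'|)
    (vT : ℝ → ℝ) (hcont : ContinuousOn vT (Set.Icc 0 nF))
    (hslip : ∀ n ∈ Set.Icc 0 nF, vT n ≠ 0 →
      HasDerivWithinAt vT (-(7 / 2) * μ * Real.sign (vT n)) (Set.Icc 0 nF) n)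
    (hroll : ∀ n ∈ Set.Icc 0 nF, vT n = 0 → ∀ m ∈ Set.Icc n nF, vT m = 0)
    (h0 : 0 ≤ vT 0) :
    ∀ n ∈ Set.Icc 0 nF, 0 ≤ vT n := by
  intro n hn
  by_contra h
  push_neg at h
  rcases eq_or_lt_of_le h0 with h0' | h0'
  · have := hroll 0 ⟨le_refl 0, hn.1.trans hn.2⟩ h0'.symm n ⟨hn.1, hn.2⟩
    linarith
  · -- vT 0 > 0, vT n < 0: IVT gives a zero m in [0, n]
    have hsub : Set.Icc 0 n ⊆ Set.Icc 0 nF := Set.Icc_subset_Icc le_rfl hn.2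
    have hivt := intermediate_value_Icc' hn.1 (hcont.mono hsub)
    have h0mem : (0 : ℝ) ∈ Set.Icc (vT n) (vT 0) := ⟨h.le, h0⟩
    obtain ⟨m, hm, hvm⟩ := hivt h0mem
    have := hroll m (hsub hm) hvm n ⟨hm.2, hn.2⟩
    linarith
end

section
/- Let 0 < d < 1/2, ω = √(1 − d²), v₀ < 0, y(τ) = (v₀/ω)·e^{−dτ}·sin(ωτ), and τ_F = (π − arctan(2dω/(1 − 2d²)))/ω the lift-off time (the smallest positive zero of Λ(τ) = −2d·y'(τ) − y(τ)). Then the lift-off normal velocity is exactly y'(τ_F) = −v₀·e^{−dτ_F} > 0; equivalently, the kinematic coefficient of restitution r = y'(τ_F)/(−v₀) equals e^{−dτ_F}. -/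
/-!
Writing `α = arctan (2dω / (1 - 2d²))`, the point `(1 - 2d², 2dω)` lies on the unit circle
because `ω² = 1 - d²`, so `cos α = 1 - 2d²` and `sin α = 2dω`. At lift-off `ωτ_F = π - α`, and
`y'(τ) = (v₀/ω) e^{-dτ} (ω cos ωτ - d sin ωτ)` collapses there to `-v₀ e^{-dτ_F}`, since
`ω cos (π - α) - d sin (π - α) = -ω (1 - 2d²) - 2d²ω = -ω`.
-/

open Real

namespace Real

variable {x y : ℝ}

theorem sqrt_one_add_div_sq_of_sq_add_sq (hx : 0 < x) (h : x ^ 2 + y ^ 2 = 1) :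
    √(1 + (y / x) ^ 2) = 1 / x := by
  have hsq : 1 + (y / x) ^ 2 = (1 / x) ^ 2 := by
    field_simp
    linarith
  rw [hsq, sqrt_sq (by positivity)]

theorem cos_arctan_div_of_sq_add_sq (hx : 0 < x) (h : x ^ 2 + y ^ 2 = 1) :
    cos (arctan (y / x)) = x := by
  rw [cos_arctan, sqrt_one_add_div_sq_of_sq_add_sq hx h, one_div_one_div]

theorem sin_arctan_div_of_sq_add_sq (hx : 0 < x) (h : x ^ 2 + y ^ 2 = 1) :
    sin (arctan (y / x)) = y := by
  rw [sin_arctan, sqrt_one_add_div_sq_of_sq_add_sq hx h]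
  field_simp

end Real

theorem hasDerivAt_damped_sin (c d ω τ : ℝ) :
    HasDerivAt (fun t => c * exp (-(d * t)) * sin (ω * t))
      (c * exp (-(d * τ)) * (ω * cos (ω * τ) - d * sin (ω * τ))) τ := by
  have hexp : HasDerivAt (fun t => exp (-(d * t))) (exp (-(d * τ)) * -d) τ :=
    (((hasDerivAt_id τ).const_mul d).neg.congr_deriv (by simp)).exp
  have hsin : HasDerivAt (fun t => sin (ω * t)) (cos (ω * τ) * ω) τ :=
    ((hasDerivAt_id τ).const_mul ω).sin.congr_deriv (by simp)
  exact ((hexp.const_mul c).mul hsin).congr_deriv (by ring)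

theorem damped_phase_at_liftoff {d ω : ℝ} (hω : ω ^ 2 = 1 - d ^ 2) (hd : 0 < 1 - 2 * d ^ 2) :
    ω * cos (π - arctan (2 * d * ω / (1 - 2 * d ^ 2)))
      - d * sin (π - arctan (2 * d * ω / (1 - 2 * d ^ 2))) = -ω := by
  have hcircle : (1 - 2 * d ^ 2) ^ 2 + (2 * d * ω) ^ 2 = 1 := by
    linear_combination 4 * d ^ 2 * hω
  rw [cos_pi_sub, sin_pi_sub, cos_arctan_div_of_sq_add_sq hd hcircle,
    sin_arctan_div_of_sq_add_sq hd hcircle]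
  ring

/-- Kelvin–Voigt bounce (zero-gravity limit), `0 < d < 1/2`, `ω = √(1 − d²)`,
`v₀ < 0`, `y(τ) = (v₀/ω)·e^{−dτ}·sin(ωτ)`, lift-off time
`τ_F = (π − arctan(2dω/(1 − 2d²)))/ω` (smallest positive zero of
`Λ = −2d·y' − y`). The lift-off normal velocity is `y'(τ_F) = −v₀·e^{−dτ_F} > 0`;
equivalently, the kinematic coefficient of restitution `r = y'(τ_F)/(−v₀)`
equals `e^{−dτ_F}`. -/
theorem kelvin_voigt_liftoff_velocity
    (d ω v₀ : ℝ) (hd0 : 0 < d) (hd1 : d < 1 / 2) (hω : ω = Real.sqrt (1 - d ^ 2))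
    (hv₀ : v₀ < 0)
    (y : ℝ → ℝ)
    (hy : y = fun τ => (v₀ / ω) * Real.exp (-(d * τ)) * Real.sin (ω * τ))
    (τF : ℝ)
    (hτF : τF = (Real.pi - Real.arctan (2 * d * ω / (1 - 2 * d ^ 2))) / ω) :
    deriv y τF = -v₀ * Real.exp (-(d * τF)) ∧
      0 < deriv y τF ∧
      deriv y τF / (-v₀) = Real.exp (-(d * τF)) := by
  have hd : 0 < 1 - 2 * d ^ 2 := by nlinarith
  have hω0 : 0 < ω := hω ▸ sqrt_pos.mpr (by nlinarith)
  have hω2 : ω ^ 2 = 1 - d ^ 2 := hω ▸ sq_sqrt (by nlinarith)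
  have hphase : ω * τF = π - arctan (2 * d * ω / (1 - 2 * d ^ 2)) := by
    rw [hτF]
    field_simp
  have hvel : deriv y τF = -v₀ * exp (-(d * τF)) := by
    rw [hy, (hasDerivAt_damped_sin _ d ω τF).deriv, hphase, damped_phase_at_liftoff hω2 hd]
    field_simp
  have hpos : 0 < -v₀ * exp (-(d * τF)) := mul_pos (neg_pos.mpr hv₀) (exp_pos _)
  refine ⟨hvel, hvel ▸ hpos, ?_⟩
  rw [hvel, mul_div_cancel_left₀ _ (neg_ne_zero.mpr hv₀.ne)]
end

section
/- For the Kelvin–Voigt Filippov bounce system, at every point p = (X, X', Y, Y', Ω) ∈ ℝ⁵ with Λ_N(p) > 0, the sliding (rolling) condition γ(p) ∈ (0, 1) holds if and only if |2·d₁·η·X' + η²·X| < (7/2)·μ·Λ_N(p); i.e. rolling is maintained exactly while the tangential force required to sustain it lies strictly inside the Coulomb friction cone. -/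
open Matrix

/-- Normal contact force `Λ_N(p) = −2d₂·Y' − Y − ε²·g` at `p = (X, X', Y, Y', Ω)`. -/
noncomputable def lamN (d₂ ε g : ℝ) (p : Fin 5 → ℝ) : ℝ := -2 * d₂ * p 3 - p 2 - ε ^ 2 * g

/-- Forward-slip vector field `F₁` (valid where `H = X' + Ω > 0`). -/
noncomputable def F1 (μ d₁ d₂ η ε g : ℝ) (p : Fin 5 → ℝ) : Fin 5 → ℝ :=
  ![p 1,
    -μ * lamN d₂ ε g p - 2 * d₁ * η * p 1 - η ^ 2 * p 0,
    p 3,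
    -2 * d₂ * p 3 - p 2 - ε ^ 2 * g,
    -(5 / 2) * μ * lamN d₂ ε g p]

/-- Backward-slip vector field `F₂` (valid where `H = X' + Ω < 0`). -/
noncomputable def F2 (μ d₁ d₂ η ε g : ℝ) (p : Fin 5 → ℝ) : Fin 5 → ℝ :=
  ![p 1,
    μ * lamN d₂ ε g p - 2 * d₁ * η * p 1 - η ^ 2 * p 0,
    p 3,
    -2 * d₂ * p 3 - p 2 - ε ^ 2 * g,
    (5 / 2) * μ * lamN d₂ ε g p]

/-- Gradient of the slip function `H(p) = X' + Ω`. -/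
noncomputable def gradH : Fin 5 → ℝ := ![0, 1, 0, 0, 1]

/-- The Filippov sliding coefficient `γ = (F₁·∇H)/((F₁ − F₂)·∇H)`. -/
noncomputable def slidingCoeff (μ d₁ d₂ η ε g : ℝ) (p : Fin 5 → ℝ) : ℝ :=
  (F1 μ d₁ d₂ η ε g p ⬝ᵥ gradH) / ((F1 μ d₁ d₂ η ε g p - F2 μ d₁ d₂ η ε g p) ⬝ᵥ gradH)

/-- For the Kelvin–Voigt Filippov bounce system, wherever `Λ_N(p) > 0` the sliding
(rolling) condition `γ(p) ∈ (0, 1)` holds iff the tangential force required to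
sustain rolling lies strictly inside the Coulomb friction cone:
`|2d₁η·X' + η²·X| < (7/2)·μ·Λ_N(p)`. -/
theorem slidingCoeff_mem_Ioo_iff_friction_cone
    (μ d₁ d₂ η ε g : ℝ) (hμ : 0 < μ) (hd₁ : 0 < d₁) (hd₂ : 0 < d₂)
    (hη : 0 ≤ η) (hε : 0 ≤ ε) (hg : 0 ≤ g)
    (p : Fin 5 → ℝ) (hΛ : 0 < lamN d₂ ε g p) :
    slidingCoeff μ d₁ d₂ η ε g p ∈ Set.Ioo (0 : ℝ) 1 ↔
      |2 * d₁ * η * p 1 + η ^ 2 * p 0| < (7 / 2) * μ * lamN d₂ ε g p := by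
  set Λ := lamN d₂ ε g p with hL
  have hN : F1 μ d₁ d₂ η ε g p ⬝ᵥ gradH
      = -(7/2) * μ * Λ - (2 * d₁ * η * p 1 + η ^ 2 * p 0) := by
    simp [F1, gradH, dotProduct, Fin.sum_univ_five, ← hL]
    ring
  have hD : (F1 μ d₁ d₂ η ε g p - F2 μ d₁ d₂ η ε g p) ⬝ᵥ gradH = -7 * μ * Λ := by
    simp [F1, F2, gradH, dotProduct, Fin.sum_univ_five, ← hL]
    ring
  have hDpos : 0 < 7 * μ * Λ := by nlinarith
  rw [Set.mem_Ioo, slidingCoeff, hN, hD, abs_lt]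
  have hrw : (-(7/2) * μ * Λ - (2 * d₁ * η * p 1 + η ^ 2 * p 0)) / (-7 * μ * Λ)
      = ((7/2) * μ * Λ + (2 * d₁ * η * p 1 + η ^ 2 * p 0)) / (7 * μ * Λ) := by
    rw [div_eq_div_iff (by linarith) (by linarith)]; ring
  rw [hrw, div_pos_iff, div_lt_one hDpos]
  constructor
  · rintro ⟨h1, h2⟩
    rcases h1 with ⟨ha, hb⟩ | ⟨ha, hb⟩
    · constructor <;> linarith
    · linarith
  · rintro ⟨h1, h2⟩
    exact ⟨Or.inl ⟨by linarith, hDpos⟩, by linarith⟩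
end

section
/- Let X, Y, Ω : ℝ → ℝ be sufficiently smooth functions satisfying the forward-slip Kelvin–Voigt equations X''(τ) = −μ·Λ(τ) − 2d₁η·X'(τ) − η²·X(τ), Y''(τ) + 2d₂·Y'(τ) + Y(τ) = −ε²·g, and Ω'(τ) = −(5/2)·μ·Λ(τ), where Λ(τ) = −2d₂·Y'(τ) − Y(τ) − ε²·g. Then the slip velocity h(τ) = X'(τ) + Ω(τ) satisfies the exact second-derivative identity h''(τ) = (7/2)·μ·Y'(τ) + (7d₂ + 2d₁η)·μ·Λ(τ) + (4d₁² − 1)·η²·X'(τ) + 2d₁·η³·X(τ). -/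
/-- Second Lie derivative of the slip velocity during forward slip in the linear
Kelvin–Voigt bounce model: if `X'' = −μΛ − 2d₁η·X' − η²·X`,
`Y'' + 2d₂·Y' + Y = −ε²g` and `Ω' = −(5/2)·μΛ`, where `Λ = −2d₂·Y' − Y − ε²g`,
then `h = X' + Ω` satisfies
`h'' = (7/2)μ·Y' + (7d₂ + 2d₁η)·μΛ + (4d₁² − 1)·η²·X' + 2d₁η³·X`. -/
theorem forward_slip_second_lie_derivative
    (μ d₁ d₂ η ε g : ℝ) (hμ : 0 < μ) (hd₁ : 0 < d₁) (hd₂ : 0 < d₂)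
    (hη : 0 ≤ η) (hε : 0 ≤ ε) (hg : 0 ≤ g)
    (X Y Ω : ℝ → ℝ)
    (hX : ContDiff ℝ (⊤ : ℕ∞) X) (hY : ContDiff ℝ (⊤ : ℕ∞) Y) (hΩ : ContDiff ℝ (⊤ : ℕ∞) Ω)
    (Λ : ℝ → ℝ) (hΛ : Λ = fun τ => -2 * d₂ * deriv Y τ - Y τ - ε ^ 2 * g)
    (hXeq : ∀ τ, deriv (deriv X) τ =
      -μ * Λ τ - 2 * d₁ * η * deriv X τ - η ^ 2 * X τ)
    (hYeq : ∀ τ, deriv (deriv Y) τ + 2 * d₂ * deriv Y τ + Y τ = -ε ^ 2 * g)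
    (hΩeq : ∀ τ, deriv Ω τ = -(5 / 2) * μ * Λ τ) :
    ∀ τ, deriv (deriv (fun s => deriv X s + Ω s)) τ =
      (7 / 2) * μ * deriv Y τ + (7 * d₂ + 2 * d₁ * η) * μ * Λ τ +
        (4 * d₁ ^ 2 - 1) * η ^ 2 * deriv X τ + 2 * d₁ * η ^ 3 * X τ := by
  intro τ
  have hX' : Differentiable ℝ (deriv X) := by
    simpa using ((hX.of_le (by simp)).iterate_deriv 1).differentiable (by simp)
  have hY' : Differentiable ℝ (deriv Y) := by
    simpa using ((hY.of_le (by simp)).iterate_deriv 1).differentiable (by simp)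
  have h1 : deriv (fun s => deriv X s + Ω s)
      = fun s => -(7 / 2) * μ * (-2 * d₂ * deriv Y s - Y s - ε ^ 2 * g)
          - 2 * d₁ * η * deriv X s - η ^ 2 * X s := by
    funext s
    rw [deriv_fun_add (hX' s) ((hΩ.differentiable (by simp)) s),
      hXeq, hΩeq, hΛ]
    ring
  rw [h1]
  have HX : HasDerivAt X (deriv X τ) τ := ((hX.differentiable (by simp)) τ).hasDerivAt
  have HX' : HasDerivAt (deriv X) (deriv (deriv X) τ) τ :=
    (hX' τ).hasDerivAt
  have HY : HasDerivAt Y (deriv Y τ) τ := ((hY.differentiable (by simp)) τ).hasDerivAt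
  have HY' : HasDerivAt (deriv Y) (deriv (deriv Y) τ) τ :=
    (hY' τ).hasDerivAt
  have H : HasDerivAt
      (fun s => -(7 / 2) * μ * (-2 * d₂ * deriv Y s - Y s - ε ^ 2 * g)
          - 2 * d₁ * η * deriv X s - η ^ 2 * X s)
      (-(7 / 2) * μ * (-2 * d₂ * deriv (deriv Y) τ - deriv Y τ - 0)
          - 2 * d₁ * η * deriv (deriv X) τ - η ^ 2 * deriv X τ) τ := by
    exact ((((((HY'.const_mul (-2 * d₂)).sub HY).sub (hasDerivAt_const τ (ε ^ 2 * g))).const_mul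
      (-(7 / 2) * μ)).sub (HX'.const_mul (2 * d₁ * η))).sub (HX.const_mul (η ^ 2)))
  rw [H.deriv]
  have hY2 : deriv (deriv Y) τ = -ε ^ 2 * g - 2 * d₂ * deriv Y τ - Y τ := by
    linarith [hYeq τ]
  rw [hY2, hXeq, hΛ]
  ring
end
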